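/- Let X ∈ ℝ^{m×n}, b ∈ ℝ^m, λ > 0, let p₁ be a norm on ℝⁿ, and let p₂ : ℝⁿ → ℝ be a convex continuously differentiable function. Define g(β) = ‖Xβ − b‖ + λ p₁(β) − p₂(β) and assume g is bounded below on ℝⁿ. Let {σ^k} and {τ^k} be sequences of positive reals with σ^k → σ^∞ > 0 and τ^k → τ^∞ ≥ 0. Let {β^k} ⊂ ℝⁿ and {δ^k} ⊂ ℝⁿ be sequences such that for every k: β^{k+1} is a global minimizer over ℝⁿ of β ↦ h_k(β) + ⟨δ^k, β − β^k⟩, where h_k(β) = ‖Xβ − b‖ + λ p₁(β) − p₂(β^k) − ⟨∇p₂(β^k), β − β^k⟩ + (σ^k/2)‖β − β^k‖² + (τ^k/2)‖Xβ − Xβ^k‖²; and ‖δ^k‖ ≤ (σ^k/4)‖β^{k+1} − β^k‖ + τ^k‖X(β^{k+1} − β^k)‖²/(2‖β^{k+1} − β^k‖) if β^{k+1} ≠ β^k, with δ^k = 0 if β^{k+1} = β^k. Then every cluster point β^∞ of {β^k} is a d-stationary point of g, i.e., the one-sided directional derivative g'(β^∞; d) is nonnegative for every d ∈ ℝⁿ.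 -/

import Mathlib

open scoped RealInnerProductSpace

noncomputable section

/-- A function `p` is a norm on a real vector space. -/
def IsNorm {E : Type*} [AddCommGroup E] [Module ℝ E] (p : E → ℝ) : Prop :=
  (∀ x y, p (x + y) ≤ p x + p y) ∧ (∀ (c : ℝ) (x : E), p (c • x) = |c| * p x) ∧
    (∀ x, p x = 0 ↔ x = 0)

/-- The dual norm `q_*(z) = sup {⟨z, β⟩ : q β ≤ 1}`. -/
def dualNorm {ι : Type*} [Fintype ι] (q : EuclideanSpace ℝ ι → ℝ)
    (z : EuclideanSpace ℝ ι) : ℝ :=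
  sSup {r : ℝ | ∃ β : EuclideanSpace ℝ ι, q β ≤ 1 ∧ r = ⟪z, β⟫}

/-- `β_S`: the vector agreeing with `β` on `S` and zero on the complement. -/
def projS {n : ℕ} (S : Finset (Fin n)) (β : EuclideanSpace ℝ (Fin n)) :
    EuclideanSpace ℝ (Fin n) :=
  WithLp.toLp 2 (fun i => if i ∈ S then β i else 0)

/-- `β_{S̄}`: the vector agreeing with `β` on the complement of `S` and zero on `S`. -/
def projSc {n : ℕ} (S : Finset (Fin n)) (β : EuclideanSpace ℝ (Fin n)) :
    EuclideanSpace ℝ (Fin n) :=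
  WithLp.toLp 2 (fun i => if i ∈ S then 0 else β i)

/-- `β^{S̄}`: the restriction of `β` to the complement of `S`. -/
def restrC {n : ℕ} (S : Finset (Fin n)) (β : EuclideanSpace ℝ (Fin n)) :
    EuclideanSpace ℝ {i : Fin n // i ∉ S} :=
  WithLp.toLp 2 (fun j => β j.1)

/-- Matrix-vector multiplication as a map between Euclidean spaces. -/
def mulVecE {m n : ℕ} (X : Matrix (Fin m) (Fin n) ℝ) (β : EuclideanSpace ℝ (Fin n)) :
    EuclideanSpace ℝ (Fin m) :=
  WithLp.toLp 2 (X.mulVec β)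

/-!
Each step decreases `g` by at least `σᵏ/4 ‖βᵏ⁺¹ - βᵏ‖²`: by convexity of `p₂` the model `hₖ`
majorizes `g` up to the proximal terms, and the inexactness bound on `δᵏ` costs at most half of
them. As `g` is bounded below, the steps and hence the `δᵏ` tend to zero, so the inexact
optimality of `βᵏ⁺¹` passes to the limit along a subsequence converging to `β^∞`: the point `β^∞`
minimizes the limiting model taken at `β^∞` itself. That model agrees with `g` at `β^∞` and has
the same one-sided directional derivatives there, since its convex part has right derivatives
along lines and the linearization of `p₂` is exact to first order.
-/

open Filter Set Topology

section Line

variable {E : Type*} [NormedAddCommGroup E] [InnerProductSpace ℝ E] {f : E → ℝ} {x d : E}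

theorem ConvexOn.comp_line (hf : ConvexOn ℝ univ f) (x d : E) :
    ConvexOn ℝ univ fun t : ℝ => f (x + t • d) := by
  have hline : (fun t : ℝ => f (x + t • d)) = f ∘ AffineMap.lineMap x (x + d) := by
    funext t
    simp [AffineMap.lineMap_apply, add_comm]
  simpa [hline] using hf.comp_affineMap (AffineMap.lineMap x (x + d))

theorem ConvexOn.exists_hasDerivWithinAt_line (hf : ConvexOn ℝ univ f) (x d : E) :
    ∃ L, HasDerivWithinAt (fun t : ℝ => f (x + t • d)) L (Ioi 0) 0 :=
  ⟨_, (hf.comp_line x d).hasDerivWithinAt_rightDeriv_of_mem_interior (by simp)⟩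

theorem DifferentiableAt.hasDerivAt_line [CompleteSpace E] (hf : DifferentiableAt ℝ f x) (d : E) :
    HasDerivAt (fun t : ℝ => f (x + t • d)) ⟪gradient f x, d⟫ 0 := by
  rw [inner_gradient_left]
  have hline : HasDerivAt (fun t : ℝ => x + t • d) d 0 := by
    simpa using ((hasDerivAt_id (0 : ℝ)).smul_const d).const_add x
  have hf' : HasFDerivAt f (fderiv ℝ f x) (x + (0 : ℝ) • d) := by simpa using hf.hasFDerivAt
  exact hf'.comp_hasDerivAt 0 hline

theorem ConvexOn.add_inner_gradient_le [CompleteSpace E] (hf : ConvexOn ℝ univ f)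
    (hd : DifferentiableAt ℝ f x) (y : E) : f x + ⟪gradient f x, y - x⟫ ≤ f y := by
  have h := (hf.comp_line x (y - x)).le_slope_of_hasDerivAt (mem_univ 0) (mem_univ 1) one_pos
    (hd.hasDerivAt_line (y - x))
  simp only [slope_def_field, sub_zero, div_one, one_smul, zero_smul, add_zero,
    add_sub_cancel] at h
  linarith

theorem HasDerivWithinAt.nonneg_of_forall_le {m : ℝ → ℝ} {L : ℝ}
    (hm : HasDerivWithinAt m L (Ioi 0) 0) (hmin : ∀ t > 0, m 0 ≤ m t) : 0 ≤ L := by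
  rw [hasDerivWithinAt_iff_tendsto_slope, sdiff_singleton_eq_self self_notMem_Ioi] at hm
  refine ge_of_tendsto hm (eventually_nhdsWithin_of_forall fun t ht => ?_)
  rw [slope_def_field]
  exact div_nonneg (sub_nonneg.2 (hmin t ht)) (by simpa using ht.le)

theorem HasDerivWithinAt.tendsto_line_quotient {L : ℝ}
    (h : HasDerivWithinAt (fun t : ℝ => f (x + t • d)) L (Ioi 0) 0) :
    Tendsto (fun t : ℝ => (f (x + t • d) - f x) / t) (𝓝[>] 0) (𝓝 L) := by
  rw [hasDerivWithinAt_iff_tendsto_slope, sdiff_singleton_eq_self self_notMem_Ioi] at h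
  refine h.congr fun t => ?_
  simp [slope_def_field]

end Line

theorem tendsto_zero_of_add_le {a c : ℕ → ℝ} (ha : BddBelow (range a)) (hc : ∀ k, 0 ≤ c k)
    (h : ∀ k, a (k + 1) + c k ≤ a k) : Tendsto c atTop (𝓝 0) := by
  have hanti : Antitone a := antitone_nat_of_succ_le fun k => by linarith [h k, hc k]
  have hlim := tendsto_atTop_ciInf hanti ha
  have hdiff : Tendsto (fun k => a k - a (k + 1)) atTop (𝓝 0) := by
    simpa using hlim.sub (hlim.comp (tendsto_add_atTop_nat 1))
  exact squeeze_zero hc (fun k => by linarith [h k]) hdiff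

section Inexact

variable {E F : Type*} [NormedAddCommGroup E] [InnerProductSpace ℝ E]
  [NormedAddCommGroup F] [NormedSpace ℝ F] {A : E →L[ℝ] F} {σ τ : ℝ} {y y' δ : E}

theorem abs_inner_le_of_inexact
    (hδ : y' ≠ y → ‖δ‖ ≤ σ / 4 * ‖y' - y‖ + τ * ‖A (y' - y)‖ ^ 2 / (2 * ‖y' - y‖)) :
    |⟪δ, y' - y⟫| ≤ σ / 4 * ‖y' - y‖ ^ 2 + τ / 2 * ‖A (y' - y)‖ ^ 2 := by
  rcases eq_or_ne y' y with rfl | hne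
  · simp
  have hpos : 0 < ‖y' - y‖ := norm_pos_iff.2 (sub_ne_zero.2 hne)
  calc |⟪δ, y' - y⟫| ≤ ‖δ‖ * ‖y' - y‖ := abs_real_inner_le_norm _ _
    _ ≤ (σ / 4 * ‖y' - y‖ + τ * ‖A (y' - y)‖ ^ 2 / (2 * ‖y' - y‖)) * ‖y' - y‖ := by
      gcongr
      exact hδ hne
    _ = σ / 4 * ‖y' - y‖ ^ 2 + τ / 2 * ‖A (y' - y)‖ ^ 2 := by
      field_simp

theorem norm_le_of_inexact (hτ : 0 ≤ τ)
    (hδ : y' ≠ y → ‖δ‖ ≤ σ / 4 * ‖y' - y‖ + τ * ‖A (y' - y)‖ ^ 2 / (2 * ‖y' - y‖))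
    (hδ0 : y' = y → δ = 0) : ‖δ‖ ≤ (σ / 4 + τ * ‖A‖ ^ 2 / 2) * ‖y' - y‖ := by
  rcases eq_or_ne y' y with rfl | hne
  · simp [hδ0 rfl]
  have hpos : 0 < ‖y' - y‖ := norm_pos_iff.2 (sub_ne_zero.2 hne)
  have hA : ‖A (y' - y)‖ ^ 2 ≤ ‖A‖ ^ 2 * ‖y' - y‖ ^ 2 := by
    rw [← mul_pow]
    exact pow_le_pow_left₀ (norm_nonneg _) (A.le_opNorm _) 2
  calc ‖δ‖ ≤ σ / 4 * ‖y' - y‖ + τ * ‖A (y' - y)‖ ^ 2 / (2 * ‖y' - y‖) := hδ hne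
    _ ≤ σ / 4 * ‖y' - y‖ + τ * (‖A‖ ^ 2 * ‖y' - y‖ ^ 2) / (2 * ‖y' - y‖) := by gcongr
    _ = (σ / 4 + τ * ‖A‖ ^ 2 / 2) * ‖y' - y‖ := by field_simp

end Inexact

section ProxModel

variable {E F : Type*} [NormedAddCommGroup E] [InnerProductSpace ℝ E] [CompleteSpace E]
  [NormedAddCommGroup F] [NormedSpace ℝ F]

/-- The model `hₖ` of the statement at `y = βᵏ`, with `Φ = ‖X · - b‖ + λ p₁`, `ψ = p₂`, `A = X`. -/
def proxModel (Φ ψ : E → ℝ) (A : E →L[ℝ] F) (σ τ : ℝ) (y x : E) : ℝ :=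
  Φ x - ψ y - ⟪gradient ψ y, x - y⟫ + σ / 2 * ‖x - y‖ ^ 2 + τ / 2 * ‖A x - A y‖ ^ 2

variable {Φ ψ : E → ℝ} {A : E →L[ℝ] F} {σ τ : ℝ} {y y' δ : E}

@[simp]
theorem proxModel_self (y : E) : proxModel Φ ψ A σ τ y y = Φ y - ψ y := by
  simp [proxModel]

theorem proxModel_line (y d : E) (t : ℝ) :
    proxModel Φ ψ A σ τ y (y + t • d) = Φ (y + t • d) +
      (-ψ y - t * ⟪gradient ψ y, d⟫ + t ^ 2 * (σ / 2 * ‖d‖ ^ 2 + τ / 2 * ‖A d‖ ^ 2)) := by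
  simp only [proxModel, add_sub_cancel_left, map_add, map_smul, inner_smul_right, norm_smul,
    Real.norm_eq_abs, mul_pow, sq_abs]
  ring

theorem sub_add_le_proxModel (hψ : ConvexOn ℝ univ ψ) {y : E} (hy : DifferentiableAt ℝ ψ y)
    (x : E) : Φ x - ψ x + σ / 2 * ‖x - y‖ ^ 2 + τ / 2 * ‖A x - A y‖ ^ 2 ≤
      proxModel Φ ψ A σ τ y x := by
  have := hψ.add_inner_gradient_le hy x
  simp only [proxModel]
  linarith

theorem continuous_proxModel (hΦ : Continuous Φ) (hψ : ContDiff ℝ 1 ψ) :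
    Continuous fun p : ℝ × ℝ × E × E => proxModel Φ ψ A p.1 p.2.1 p.2.2.1 p.2.2.2 := by
  have hgrad : Continuous (gradient ψ) :=
    (InnerProductSpace.toDual ℝ E).symm.continuous.comp (hψ.continuous_fderiv one_ne_zero)
  unfold proxModel
  fun_prop

theorem exists_nonneg_tendsto_of_le_proxModel (hΦ : ConvexOn ℝ univ Φ) {y : E}
    (hy : DifferentiableAt ℝ ψ y) (hmin : ∀ x, Φ y - ψ y ≤ proxModel Φ ψ A σ τ y x) (d : E) :
    ∃ L, 0 ≤ L ∧ Tendsto (fun t : ℝ => ((Φ - ψ) (y + t • d) - (Φ - ψ) y) / t) (𝓝[>] 0) (𝓝 L) := by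
  obtain ⟨LΦ, hLΦ⟩ := hΦ.exists_hasDerivWithinAt_line y d
  have hquad : HasDerivAt (fun t : ℝ => -ψ y - t * ⟪gradient ψ y, d⟫ +
      t ^ 2 * (σ / 2 * ‖d‖ ^ 2 + τ / 2 * ‖A d‖ ^ 2)) (-⟪gradient ψ y, d⟫) 0 := by
    simpa using (((hasDerivAt_id (0 : ℝ)).mul_const ⟪gradient ψ y, d⟫).const_sub (-ψ y)).fun_add
      ((hasDerivAt_pow 2 (0 : ℝ)).mul_const (σ / 2 * ‖d‖ ^ 2 + τ / 2 * ‖A d‖ ^ 2))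
  have hmodel : HasDerivWithinAt (fun t : ℝ => proxModel Φ ψ A σ τ y (y + t • d))
      (LΦ - ⟪gradient ψ y, d⟫) (Ioi 0) 0 := by
    simp only [proxModel_line]
    simpa [sub_eq_add_neg] using hLΦ.fun_add hquad.hasDerivWithinAt
  refine ⟨LΦ - ⟪gradient ψ y, d⟫, hmodel.nonneg_of_forall_le fun t _ => ?_, ?_⟩
  · simpa using hmin (y + t • d)
  · exact (hLΦ.fun_sub (hy.hasDerivAt_line d).hasDerivWithinAt).tendsto_line_quotient

theorem sub_add_le_of_inexact_min (hψ : ConvexOn ℝ univ ψ) (hy : DifferentiableAt ℝ ψ y)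
    (hmin : proxModel Φ ψ A σ τ y y' + ⟪δ, y' - y⟫ ≤ proxModel Φ ψ A σ τ y y + ⟪δ, y - y⟫)
    (hδ : y' ≠ y → ‖δ‖ ≤ σ / 4 * ‖y' - y‖ + τ * ‖A (y' - y)‖ ^ 2 / (2 * ‖y' - y‖)) :
    Φ y' - ψ y' + σ / 4 * ‖y' - y‖ ^ 2 ≤ Φ y - ψ y := by
  have hmodel := sub_add_le_proxModel (Φ := Φ) (A := A) (σ := σ) (τ := τ) hψ hy y'
  have hinner := abs_inner_le_of_inexact hδ
  rw [map_sub] at hinner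
  rw [proxModel_self, sub_self, inner_zero_right, add_zero] at hmin
  linarith [neg_abs_le ⟪δ, y' - y⟫]

theorem le_proxModel_of_tendsto {ι : Type*} {l : Filter ι} [l.NeBot] (hΦ : Continuous Φ)
    (hψ : ContDiff ℝ 1 ψ) {σs τs : ι → ℝ} {ys ys' δs : ι → E} {z : E}
    (hσ : Tendsto σs l (𝓝 σ)) (hτ : Tendsto τs l (𝓝 τ)) (hy : Tendsto ys l (𝓝 z))
    (hy' : Tendsto ys' l (𝓝 z)) (hδ : Tendsto δs l (𝓝 0))
    (hmin : ∀ i x, proxModel Φ ψ A (σs i) (τs i) (ys i) (ys' i) + ⟪δs i, ys' i - ys i⟫ ≤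
      proxModel Φ ψ A (σs i) (τs i) (ys i) x + ⟪δs i, x - ys i⟫) (x : E) :
    Φ z - ψ z ≤ proxModel Φ ψ A σ τ z x := by
  have hcont := continuous_proxModel (A := A) hΦ hψ
  have hlhs := ((hcont.tendsto (σ, τ, z, z)).comp
    (hσ.prodMk_nhds (hτ.prodMk_nhds (hy.prodMk_nhds hy')))).add (hδ.inner (hy'.sub hy))
  have hrhs := ((hcont.tendsto (σ, τ, z, x)).comp
    (hσ.prodMk_nhds (hτ.prodMk_nhds (hy.prodMk_nhds tendsto_const_nhds)))).add
    (hδ.inner ((tendsto_const_nhds (x := x)).sub hy))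
  simp only [Function.comp_def, proxModel_self, inner_zero_left, add_zero] at hlhs hrhs
  exact le_of_tendsto_of_tendsto' hlhs hrhs fun i => hmin i x

variable {σs τs : ℕ → ℝ} {β δ : ℕ → E}

theorem tendsto_succ_sub_of_inexact_min (hψ : ConvexOn ℝ univ ψ) (hψd : Differentiable ℝ ψ)
    (hbdd : BddBelow (range (Φ - ψ))) (hσpos : ∀ k, 0 < σs k) {σ : ℝ} (hσ : 0 < σ)
    (hσs : Tendsto σs atTop (𝓝 σ))
    (hmin : ∀ k, proxModel Φ ψ A (σs k) (τs k) (β k) (β (k + 1)) + ⟪δ k, β (k + 1) - β k⟫ ≤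
      proxModel Φ ψ A (σs k) (τs k) (β k) (β k) + ⟪δ k, β k - β k⟫)
    (hδ : ∀ k, β (k + 1) ≠ β k → ‖δ k‖ ≤ σs k / 4 * ‖β (k + 1) - β k‖ +
      τs k * ‖A (β (k + 1) - β k)‖ ^ 2 / (2 * ‖β (k + 1) - β k‖)) :
    Tendsto (fun k => β (k + 1) - β k) atTop (𝓝 0) := by
  have hdecrease : Tendsto (fun k => σs k / 4 * ‖β (k + 1) - β k‖ ^ 2) atTop (𝓝 0) :=
    tendsto_zero_of_add_le (a := fun k => Φ (β k) - ψ (β k))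
      (hbdd.mono (range_comp_subset_range β (Φ - ψ))) (fun k => by have := hσpos k; positivity)
      fun k => sub_add_le_of_inexact_min hψ (hψd _) (hmin k) (hδ k)
  have hsq : Tendsto (fun k => ‖β (k + 1) - β k‖ ^ 2) atTop (𝓝 0) := by
    have := (hdecrease.mul (hσs.inv₀ hσ.ne')).const_mul 4
    rw [zero_mul, mul_zero] at this
    refine this.congr fun k => ?_
    field_simp [(hσpos k).ne']
  rw [tendsto_zero_iff_norm_tendsto_zero]
  simpa [Function.comp_def, Real.sqrt_sq_eq_abs] using (Real.continuous_sqrt.tendsto 0).comp hsq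

theorem exists_nonneg_tendsto_of_mapClusterPt_inexact_min (hΦ : ConvexOn ℝ univ Φ)
    (hΦc : Continuous Φ) (hψ : ConvexOn ℝ univ ψ) (hψs : ContDiff ℝ 1 ψ)
    (hbdd : BddBelow (range (Φ - ψ))) (hσpos : ∀ k, 0 < σs k) (hτpos : ∀ k, 0 ≤ τs k)
    {σ τ : ℝ} (hσ : 0 < σ) (hσs : Tendsto σs atTop (𝓝 σ)) (hτs : Tendsto τs atTop (𝓝 τ))
    (hmin : ∀ k x, proxModel Φ ψ A (σs k) (τs k) (β k) (β (k + 1)) + ⟪δ k, β (k + 1) - β k⟫ ≤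
      proxModel Φ ψ A (σs k) (τs k) (β k) x + ⟪δ k, x - β k⟫)
    (hδ : ∀ k, β (k + 1) ≠ β k → ‖δ k‖ ≤ σs k / 4 * ‖β (k + 1) - β k‖ +
      τs k * ‖A (β (k + 1) - β k)‖ ^ 2 / (2 * ‖β (k + 1) - β k‖))
    (hδ0 : ∀ k, β (k + 1) = β k → δ k = 0) {z : E} (hz : MapClusterPt z atTop β) (d : E) :
    ∃ L, 0 ≤ L ∧ Tendsto (fun t : ℝ => ((Φ - ψ) (z + t • d) - (Φ - ψ) z) / t) (𝓝[>] 0) (𝓝 L) := by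
  have hψd : Differentiable ℝ ψ := hψs.differentiable one_ne_zero
  have hstep := tendsto_succ_sub_of_inexact_min hψ hψd hbdd hσpos hσ hσs
    (fun k => hmin k (β k)) hδ
  have hδlim : Tendsto δ atTop (𝓝 0) := by
    rw [tendsto_zero_iff_norm_tendsto_zero]
    refine squeeze_zero (fun k => norm_nonneg _)
      (fun k => norm_le_of_inexact (hτpos k) (hδ k) (hδ0 k)) ?_
    simpa using ((hσs.div_const 4).add ((hτs.mul_const (‖A‖ ^ 2)).div_const 2)).mul hstep.norm
  obtain ⟨φ, hφ, hβφ⟩ := hz.tendsto_subseq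
  have hβφ' : Tendsto (fun j => β (φ j + 1)) atTop (𝓝 z) := by
    simpa using ((hstep.comp hφ.tendsto_atTop).add hβφ)
  exact exists_nonneg_tendsto_of_le_proxModel hΦ (hψd z)
    (le_proxModel_of_tendsto hΦc hψs (hσs.comp hφ.tendsto_atTop) (hτs.comp hφ.tendsto_atTop)
      hβφ hβφ' (hδlim.comp hφ.tendsto_atTop) (fun j => hmin (φ j))) d

end ProxModel

theorem IsNorm.convexOn {E : Type*} [AddCommGroup E] [Module ℝ E] {p : E → ℝ} (hp : IsNorm p) :
    ConvexOn ℝ univ p := by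
  refine ⟨convex_univ, fun x _ y _ a c ha hc _ => ?_⟩
  calc p (a • x + c • y) ≤ p (a • x) + p (c • y) := hp.1 _ _
    _ = a • p x + c • p y := by rw [hp.2.1, hp.2.1, abs_of_nonneg ha, abs_of_nonneg hc]; rfl

theorem IsNorm.continuous {E : Type*} [NormedAddCommGroup E] [NormedSpace ℝ E]
    [FiniteDimensional ℝ E] {p : E → ℝ} (hp : IsNorm p) : Continuous p :=
  continuousOn_univ.1 (hp.convexOn.continuousOn isOpen_univ)

theorem pmm_cluster_point_dStationary_general {m n : ℕ} (X : Matrix (Fin m) (Fin n) ℝ)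
    (b : EuclideanSpace ℝ (Fin m)) (lam : ℝ) (hlam : 0 < lam)
    (p1 : EuclideanSpace ℝ (Fin n) → ℝ) (hp1 : IsNorm p1)
    (p2 : EuclideanSpace ℝ (Fin n) → ℝ) (hp2conv : ConvexOn ℝ Set.univ p2)
    (hp2smooth : ContDiff ℝ 1 p2)
    (g : EuclideanSpace ℝ (Fin n) → ℝ)
    (hg : ∀ β, g β = ‖mulVecE X β - b‖ + lam * p1 β - p2 β)
    (hgbdd : BddBelow (Set.range g))
    (σs τs : ℕ → ℝ) (hσpos : ∀ k, 0 < σs k) (hτpos : ∀ k, 0 < τs k)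
    (σinf τinf : ℝ) (hσinf : 0 < σinf)
    (hσtend : Filter.Tendsto σs Filter.atTop (nhds σinf))
    (hτtend : Filter.Tendsto τs Filter.atTop (nhds τinf))
    (β δ : ℕ → EuclideanSpace ℝ (Fin n))
    (hk : ℕ → EuclideanSpace ℝ (Fin n) → ℝ)
    (hhk : ∀ (k : ℕ) (x : EuclideanSpace ℝ (Fin n)),
      hk k x = ‖mulVecE X x - b‖ + lam * p1 x - p2 (β k) -
        ⟪gradient p2 (β k), x - β k⟫ + σs k / 2 * ‖x - β k‖ ^ 2 +
        τs k / 2 * ‖mulVecE X x - mulVecE X (β k)‖ ^ 2)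
    (hmin : ∀ (k : ℕ) (x : EuclideanSpace ℝ (Fin n)),
      hk k (β (k + 1)) + ⟪δ k, β (k + 1) - β k⟫ ≤ hk k x + ⟪δ k, x - β k⟫)
    (hδbound : ∀ k : ℕ, β (k + 1) ≠ β k →
      ‖δ k‖ ≤ σs k / 4 * ‖β (k + 1) - β k‖ +
        τs k * ‖mulVecE X (β (k + 1) - β k)‖ ^ 2 / (2 * ‖β (k + 1) - β k‖))
    (hδzero : ∀ k : ℕ, β (k + 1) = β k → δ k = 0)
    (βinf : EuclideanSpace ℝ (Fin n)) (hcluster : MapClusterPt βinf Filter.atTop β) :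
    ∀ d : EuclideanSpace ℝ (Fin n), ∃ L : ℝ, 0 ≤ L ∧
      Filter.Tendsto (fun t : ℝ => (g (βinf + t • d) - g βinf) / t)
        (nhdsWithin 0 (Set.Ioi 0)) (nhds L) := by
  let A := (Matrix.toEuclideanLin X).toContinuousLinearMap
  let Φ := fun x => ‖A x - b‖ + lam * p1 x
  have hresidual : ConvexOn ℝ univ fun x => ‖A x - b‖ := by
    have heq : (fun x => ‖A x - b‖) = (norm ∘ fun z => -b + z) ∘ A := by
      funext x
      simp [neg_add_eq_sub]
    simpa [heq] using (convexOn_univ_norm.translate_right (-b)).comp_linearMap A.toLinearMap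
  have hΦ : ConvexOn ℝ univ Φ := hresidual.add (hp1.convexOn.smul hlam.le)
  have hΦc : Continuous Φ :=
    (A.continuous.sub continuous_const).norm.add (continuous_const.mul hp1.continuous)
  obtain rfl : g = Φ - p2 := funext hg
  have hmodel : ∀ k, hk k = proxModel Φ p2 A (σs k) (τs k) (β k) := fun k => funext (hhk k)
  simp only [hmodel] at hmin
  exact exists_nonneg_tendsto_of_mapClusterPt_inexact_min hΦ hΦc hp2conv hp2smooth hgbdd hσpos
    (fun k => (hτpos k).le) hσinf hσtend hτtend hmin hδbound hδzero hcluster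

/-- every cluster point of the sequence generated by the inexact PMM
algorithm is a d-stationary point of `g`. -/
theorem pmm_cluster_point_dStationary {m n : ℕ} (X : Matrix (Fin m) (Fin n) ℝ)
    (b : EuclideanSpace ℝ (Fin m)) (lam : ℝ) (hlam : 0 < lam)
    (p1 : EuclideanSpace ℝ (Fin n) → ℝ) (hp1 : IsNorm p1)
    (p2 : EuclideanSpace ℝ (Fin n) → ℝ) (hp2conv : ConvexOn ℝ Set.univ p2)
    (hp2smooth : ContDiff ℝ 1 p2)
    (g : EuclideanSpace ℝ (Fin n) → ℝ)
    (hg : ∀ β, g β = ‖mulVecE X β - b‖ + lam * p1 β - p2 β)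
    (hgbdd : BddBelow (Set.range g))
    (σs τs : ℕ → ℝ) (hσpos : ∀ k, 0 < σs k) (hτpos : ∀ k, 0 < τs k)
    (σinf τinf : ℝ) (hσinf : 0 < σinf) (hτinf : 0 ≤ τinf)
    (hσtend : Filter.Tendsto σs Filter.atTop (nhds σinf))
    (hτtend : Filter.Tendsto τs Filter.atTop (nhds τinf))
    (β δ : ℕ → EuclideanSpace ℝ (Fin n))
    (hk : ℕ → EuclideanSpace ℝ (Fin n) → ℝ)
    (hhk : ∀ (k : ℕ) (x : EuclideanSpace ℝ (Fin n)),
      hk k x = ‖mulVecE X x - b‖ + lam * p1 x - p2 (β k) -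
        ⟪gradient p2 (β k), x - β k⟫ + σs k / 2 * ‖x - β k‖ ^ 2 +
        τs k / 2 * ‖mulVecE X x - mulVecE X (β k)‖ ^ 2)
    (hmin : ∀ (k : ℕ) (x : EuclideanSpace ℝ (Fin n)),
      hk k (β (k + 1)) + ⟪δ k, β (k + 1) - β k⟫ ≤ hk k x + ⟪δ k, x - β k⟫)
    (hδbound : ∀ k : ℕ, β (k + 1) ≠ β k →
      ‖δ k‖ ≤ σs k / 4 * ‖β (k + 1) - β k‖ +
        τs k * ‖mulVecE X (β (k + 1) - β k)‖ ^ 2 / (2 * ‖β (k + 1) - β k‖))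
    (hδzero : ∀ k : ℕ, β (k + 1) = β k → δ k = 0)
    (βinf : EuclideanSpace ℝ (Fin n)) (hcluster : MapClusterPt βinf Filter.atTop β) :
    ∀ d : EuclideanSpace ℝ (Fin n), ∃ L : ℝ, 0 ≤ L ∧
      Filter.Tendsto (fun t : ℝ => (g (βinf + t • d) - g βinf) / t)
        (nhdsWithin 0 (Set.Ioi 0)) (nhds L) :=
  pmm_cluster_point_dStationary_general X b lam hlam p1 hp1 p2 hp2conv hp2smooth g hg hgbdd σs τs
    hσpos hτpos σinf τinf hσinf hσtend hτtend β δ hk hhk hmin hδbound hδzero βinf hcluster
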